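/- The quantity R(k) = 3(k²+1)(π² − 2ζ(3)) / (π²(k²+3) − 6(k²+1)ζ(3)) satisfies R(k) > 1 for all k > 0, where ζ(3) is Apéry's constant. -/
import Mathlib

open Real

lemma zeta3_lt : (∑' n : ℕ, (1 : ℝ) / (n + 1) ^ 3) < π ^ 2 / 6 := by
  have h2 : HasSum (fun n : ℕ => (1 : ℝ) / (n + 1) ^ 2) (π ^ 2 / 6) := by
    have := hasSum_zeta_two
    rw [← (hasSum_nat_add_iff' 1)] at this
    simpa using this
  have h3 : Summable (fun n : ℕ => (1 : ℝ) / (n + 1) ^ 3) := by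
    have : Summable (fun n : ℕ => (1 : ℝ) / (n : ℝ) ^ 3) := by
      simpa [one_div, Real.rpow_natCast] using
        ((summable_nat_rpow_inv (p := (3:ℝ))).mpr (by norm_num))
    have := (summable_nat_add_iff 1).mpr this
    simpa using this
  rw [← h2.tsum_eq]
  refine Summable.tsum_lt_tsum (i := 1) (fun n => ?_) ?_ h3 h2.summable
  · apply div_le_div_of_nonneg_left (by norm_num) (by positivity)
    exact pow_le_pow_right₀ (by simp [le_add_iff_nonneg_left, n.cast_nonneg]) (by norm_num)
  · norm_num

/-- With `ζ(3) = ∑_{n≥1} 1/n³` (Apéry's constant),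
`R(k) = 3(k²+1)(π² − 2ζ(3)) / (π²(k²+3) − 6(k²+1)ζ(3)) > 1` for all `k > 0`. -/
theorem weibull_bias_ratio_gt_one (k : ℝ) (hk : 0 < k) :
    1 < 3 * (k ^ 2 + 1) * (π ^ 2 - 2 * ∑' n : ℕ, (1 : ℝ) / (n + 1) ^ 3) /
        (π ^ 2 * (k ^ 2 + 3) - 6 * (k ^ 2 + 1) * ∑' n : ℕ, (1 : ℝ) / (n + 1) ^ 3) := by
  set z := ∑' n : ℕ, (1 : ℝ) / (n + 1) ^ 3 with hz
  have hzlt : z < π ^ 2 / 6 := zeta3_lt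
  have hD : 0 < π ^ 2 * (k ^ 2 + 3) - 6 * (k ^ 2 + 1) * z := by nlinarith [sq_nonneg k]
  rw [lt_div_iff₀ hD]
  nlinarith [mul_pos (mul_pos hk hk) (mul_pos Real.pi_pos Real.pi_pos)]
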